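/- arXiv:1312.3908 — 8 statements merged into one kernel-verified Lean document; each statement's English description precedes it below -/
import Mathlib

section
/- Let R be a commutative Noetherian ring, I an ideal, and M an R-module with M ⊗_R R/I = 0. Then M ⊗_R X = 0 for every R-module X with Supp_R X ⊆ V(I). -/
open TensorProduct

/-!
Since `M ⊗ R/I ≅ M/IM`, the hypothesis says `M = IM`, hence `M = IⁿM` for every `n`. If
`Supp X ⊆ V(I)`, every prime containing the annihilator of `x ∈ X` contains `I`, so `I` lies in
the radical of that annihilator and, `I` being finitely generated, `Iⁿ x = 0` for some `n`.
Writing `m ∈ IⁿM` as a sum of terms `a • m'` with `a ∈ Iⁿ` gives `m ⊗ x = ∑ m' ⊗ a • x = 0`.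
-/

section

variable {R : Type*} [CommRing R]

namespace Submodule

variable {M : Type*} [AddCommGroup M] [Module R M]

theorem smul_top_eq_top_of_subsingleton_tensor_quotient {I : Ideal R}
    (hM : Subsingleton (M ⊗[R] (R ⧸ I))) : I • (⊤ : Submodule R M) = ⊤ :=
  Quotient.subsingleton_iff.mp (tensorQuotEquivQuotSMul M I).symm.injective.subsingleton

theorem pow_smul_top_eq_top {I : Ideal R} (h : I • (⊤ : Submodule R M) = ⊤) (n : ℕ) :
    (I ^ n) • (⊤ : Submodule R M) = ⊤ := by
  induction n with
  | zero => simp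
  | succ n ih => rw [pow_succ, mul_comm, mul_smul, ih, h]

theorem exists_pow_le_annihilator_of_support_subset {I : Ideal R} (hI : I.FG)
    (hM : Module.support R M ⊆ PrimeSpectrum.zeroLocus (I : Set R)) (x : M) :
    ∃ n : ℕ, I ^ n ≤ (R ∙ x).annihilator := by
  refine Ideal.exists_pow_le_of_le_radical_of_fg ?_ hI
  rw [← PrimeSpectrum.zeroLocus_subset_zeroLocus_iff]
  intro p hp
  exact hM (Module.mem_support_iff_exists_annihilator.mpr ⟨x, hp⟩)

end Submodule

theorem TensorProduct.tmul_eq_zero_of_mem_smul_top_of_le_annihilator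
    {M X : Type*} [AddCommGroup M] [Module R M] [AddCommGroup X] [Module R X]
    {J : Ideal R} {m : M} {x : X} (hm : m ∈ J • (⊤ : Submodule R M))
    (hx : J ≤ (R ∙ x).annihilator) : m ⊗ₜ[R] x = 0 := by
  refine Submodule.smul_induction_on hm (fun a ha m' _ => ?_) fun m₁ m₂ h₁ h₂ => ?_
  · rw [smul_tmul, (Submodule.mem_annihilator_span_singleton _ _).mp (hx ha), tmul_zero]
  · rw [add_tmul, h₁, h₂, add_zero]

end

/-- Let `R` be a commutative Noetherian ring, `I` an ideal, and `M` an `R`-module with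
`M ⊗_R R/I = 0`. Then `M ⊗_R X = 0` for every `R`-module `X` with `Supp_R X ⊆ V(I)`. -/
theorem stmt0 {R : Type*} [CommRing R] [IsNoetherianRing R] (I : Ideal R)
    (M : Type*) [AddCommGroup M] [Module R M]
    (hM : Subsingleton (M ⊗[R] (R ⧸ I)))
    (X : Type*) [AddCommGroup X] [Module R X]
    (hX : Module.support R X ⊆ PrimeSpectrum.zeroLocus (I : Set R)) :
    Subsingleton (M ⊗[R] X) := by
  have hIM := Submodule.smul_top_eq_top_of_subsingleton_tensor_quotient hM
  refine subsingleton_of_forall_eq 0 fun z => ?_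
  induction z with
  | zero => rfl
  | add a b ha hb => rw [ha, hb, add_zero]
  | tmul m x =>
    obtain ⟨n, hn⟩ :=
      Submodule.exists_pow_le_annihilator_of_support_subset (IsNoetherian.noetherian I) hX x
    refine tmul_eq_zero_of_mem_smul_top_of_le_annihilator ?_ hn
    rw [Submodule.pow_smul_top_eq_top hIM n]
    trivial
end

section
/- Let R be a commutative Noetherian ring, I an ideal, and M an R-module. Then M ⊗_R R/I = 0 if and only if the I-adic completion of M is zero, i.e. lim_α M/I^α M = 0. -/
open TensorProduct

theorem Submodule.pow_smul_eq_self {R M : Type*} [CommSemiring R] [AddCommMonoid M] [Module R M]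
    {I : Ideal R} {N : Submodule R M} (h : I • N = N) (n : ℕ) : I ^ n • N = N := by
  induction n with
  | zero => simp
  | succ n ih => rw [pow_succ', Submodule.mul_smul, ih, h]

theorem AdicCompletion.subsingleton_iff {R : Type*} [CommRing R] (I : Ideal R)
    (M : Type*) [AddCommGroup M] [Module R M] :
    Subsingleton (AdicCompletion I M) ↔ I • (⊤ : Submodule R M) = ⊤ := by
  constructor
  · intro _
    have : Subsingleton (M ⧸ (I ^ 1 • ⊤ : Submodule R M)) := (eval_surjective I M 1).subsingleton
    rw [pow_one] at this
    exact Submodule.Quotient.subsingleton_iff |>.mp this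
  · intro h
    have (n : ℕ) : Subsingleton (M ⧸ (I ^ n • ⊤ : Submodule R M)) :=
      Submodule.Quotient.subsingleton_iff |>.mpr (Submodule.pow_smul_eq_self h n)
    exact ⟨fun _ _ ↦ AdicCompletion.ext fun n ↦ Subsingleton.elim _ _⟩

theorem stmt2_general {R : Type*} [CommRing R] (I : Ideal R)
    (M : Type*) [AddCommGroup M] [Module R M] :
    Subsingleton (M ⊗[R] (R ⧸ I)) ↔ Subsingleton (AdicCompletion I M) := by
  rw [(tensorQuotEquivQuotSMul M I).subsingleton_congr, Submodule.Quotient.subsingleton_iff,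
    AdicCompletion.subsingleton_iff]

/-- Let `R` be a commutative Noetherian ring, `I` an ideal, and `M` an `R`-module.
Then `M ⊗_R R/I = 0` if and only if the `I`-adic completion of `M` is zero. -/
theorem stmt2 {R : Type*} [CommRing R] [IsNoetherianRing R] (I : Ideal R)
    (M : Type*) [AddCommGroup M] [Module R M] :
    Subsingleton (M ⊗[R] (R ⧸ I)) ↔ Subsingleton (AdicCompletion I M) :=
  stmt2_general I M
end

section
/- Let R be a commutative Noetherian ring, J ⊆ I ideals, and M an R-module. If M is I-adically complete, then M is J-adically complete. -/
/-!
Hausdorffness passes to smaller ideals directly. A `J`-adic Cauchy sequence `f` is `I`-adically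
Cauchy, so it has an `I`-adic limit `L`, and the point is that `L - f n ∈ J ^ n M`. If
`J ^ n = (e₁, …, eᵣ)`, each difference `f (n + t + 1) - f (n + t) ∈ J ^ n (J ^ t M)` is
`∑ eᵢ c_{t,i}` with `c_{t,i} ∈ I ^ t M`. The series `∑ₜ c_{t,i}` converge
`I`-adically to some `Cᵢ`, and `L - f n = ∑ eᵢ Cᵢ`.
-/

open Finset Submodule

section

variable {R M : Type*} [CommRing R] [AddCommGroup M] [Module R M]

theorem Submodule.exists_sum_smul_of_mem_span_smul {s : Finset R} {N : Submodule R M} {x : M}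
    (hx : x ∈ Ideal.span (s : Set R) • N) :
    ∃ c : R → M, (∀ e ∈ s, c e ∈ N) ∧ x = ∑ e ∈ s, e • c e := by
  rw [span_smul_eq, mem_set_smul] at hx
  obtain ⟨c, hcs, rfl⟩ := hx
  refine ⟨fun e => c e, fun e _ => (c e).2, ?_⟩
  rw [Finsupp.sum_of_support_subset c (by exact_mod_cast hcs) _ fun _ _ => smul_zero _,
    coe_sum]
  rfl

variable {I J : Ideal R}

theorem IsHausdorff.of_le (hJI : J ≤ I) [IsHausdorff I M] : IsHausdorff J M :=
  ⟨fun x hx => IsHausdorff.haus ‹_› x fun n =>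
    (hx n).mono (smul_mono_left (Ideal.pow_right_mono hJI n))⟩

theorem IsPrecomplete.exists_smodEq_sum_range [IsPrecomplete I M] {a : ℕ → M}
    (ha : ∀ t, a t ∈ (I ^ t • ⊤ : Submodule R M)) :
    ∃ S, ∀ k, S ≡ ∑ t ∈ range k, a t [SMOD (I ^ k • ⊤ : Submodule R M)] := by
  suffices ∃ S, ∀ k, ∑ t ∈ range k, a t ≡ S [SMOD (I ^ k • ⊤ : Submodule R M)] from
    this.imp fun S hS k => (hS k).symm
  refine IsPrecomplete.prec ‹_› fun {m n} hmn => ?_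
  rw [SModEq.sub_mem, ← sum_range_add_sum_Ico _ hmn, sub_add_cancel_left, neg_mem_iff]
  exact sum_mem fun t ht =>
    smul_mono_left (Ideal.pow_le_pow_right (mem_Ico.mp ht).1) (ha t)

theorem IsAdicComplete.mem_smul_top_of_smodEq_sum_range [IsAdicComplete I M] {K : Ideal R}
    (hK : K.FG) {a : ℕ → M} (ha : ∀ t, a t ∈ K • (I ^ t • ⊤ : Submodule R M)) {S : M}
    (hS : ∀ k, S ≡ ∑ t ∈ range k, a t [SMOD (I ^ k • ⊤ : Submodule R M)]) :
    S ∈ K • (⊤ : Submodule R M) := by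
  obtain ⟨s, rfl⟩ := hK
  choose c hc hac using fun t => exists_sum_smul_of_mem_span_smul (ha t)
  choose! C hC using fun e (he : e ∈ s) =>
    IsPrecomplete.exists_smodEq_sum_range (I := I) fun t => hc t e he
  have hS_eq : S = ∑ e ∈ s, e • C e := by
    refine IsHausdorff.eq_iff_smodEq (I := I) |>.2 fun k => ?_
    calc S ≡ ∑ t ∈ range k, a t [SMOD (I ^ k • ⊤ : Submodule R M)] := hS k
      _ = ∑ e ∈ s, e • ∑ t ∈ range k, c t e := by
        simp_rw [hac, smul_sum]; exact sum_comm
      _ ≡ ∑ e ∈ s, e • C e [SMOD (I ^ k • ⊤ : Submodule R M)] :=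
        SModEq.sum fun e he => (hC e he k).symm.smul e
  rw [hS_eq]
  exact sum_mem fun e he => smul_mem_smul (Ideal.subset_span he) mem_top

theorem IsPrecomplete.of_le [IsAdicComplete I M] (hJ : J.FG) (hJI : J ≤ I) :
    IsPrecomplete J M := by
  have hpow (n : ℕ) : (J ^ n • ⊤ : Submodule R M) ≤ I ^ n • ⊤ :=
    smul_mono_left (Ideal.pow_right_mono hJI n)
  refine ⟨fun {f} hf => ?_⟩
  obtain ⟨L, hL⟩ := IsPrecomplete.prec (I := I) inferInstance fun hmn => (hf hmn).mono (hpow _)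
  refine ⟨L, fun n => ?_⟩
  rw [SModEq.comm, SModEq.sub_mem]
  refine IsAdicComplete.mem_smul_top_of_smodEq_sum_range (I := I) (hJ.pow (n := n))
    (a := fun t => f (n + (t + 1)) - f (n + t)) (fun t => ?_) fun k => ?_
  · have hd := SModEq.sub_mem.mp (hf (Nat.le_succ (n + t))).symm
    rw [pow_add, mul_smul] at hd
    exact smul_mono_right _ (hpow t) hd
  · rw [sum_range_sub (fun t => f (n + t)), add_zero]
    refine SModEq.sub ((hL (n + k)).symm.mono ?_) SModEq.rfl
    exact smul_mono_left (Ideal.pow_le_pow_right (Nat.le_add_left k n))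

theorem IsAdicComplete.of_le [IsAdicComplete I M] (hJ : J.FG) (hJI : J ≤ I) :
    IsAdicComplete J M :=
  { toIsHausdorff := .of_le hJI
    toIsPrecomplete := .of_le hJ hJI }

end

/-- Let `R` be a commutative Noetherian ring, `J ⊆ I` ideals, and `M` an `R`-module.
If `M` is `I`-adically complete, then `M` is `J`-adically complete. -/
theorem stmt4 {R : Type*} [CommRing R] [IsNoetherianRing R] {I J : Ideal R} (hJI : J ≤ I)
    (M : Type*) [AddCommGroup M] [Module R M]
    (hM : IsAdicComplete I M) :
    IsAdicComplete J M :=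
  IsAdicComplete.of_le (IsNoetherian.noetherian J) hJI
end

section
/- Let R be a commutative Noetherian ring, I an ideal, and x_1,…,x_r ∈ R elements with Rad(x_1,…,x_r)R = Rad I. If an R-module M is x_i R-adically complete for each i = 1,…,r and M is I-separated (i.e. ∩_α I^α M = 0), then M is I-adically complete. -/
open Submodule

section Aux

variable {R : Type*} [CommRing R] {M : Type*} [AddCommGroup M] [Module R M]

/-- Precompleteness transfers between ideals whose powers are mutually comparable. -/
lemma isPrecomplete_of_pow_le {I J : Ideal R} (c m : ℕ)
    (hc : I ^ (c + 1) ≤ J) (hm : J ^ (m + 1) ≤ I)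
    (h : IsPrecomplete J M) : IsPrecomplete I M := by
  constructor
  intro f hf
  have hg : ∀ {a b : ℕ}, a ≤ b →
      f ((c + 1) * a) ≡ f ((c + 1) * b) [SMOD (J ^ a • ⊤ : Submodule R M)] := by
    intro a b hab
    refine SModEq.mono (smul_mono_left ?_) (hf (Nat.mul_le_mul_left (c + 1) hab))
    calc I ^ ((c + 1) * a) = (I ^ (c + 1)) ^ a := by rw [pow_mul]
      _ ≤ J ^ a := Ideal.pow_right_mono hc a
  obtain ⟨L, hL⟩ := h.prec hg
  refine ⟨L, fun n => ?_⟩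
  have h1 : f n ≡ f ((c + 1) * ((m + 1) * n)) [SMOD (I ^ n • ⊤ : Submodule R M)] :=
    hf (le_trans (Nat.le_mul_of_pos_left n (Nat.succ_pos m))
      (Nat.le_mul_of_pos_left _ (Nat.succ_pos c)))
  have h2 : f ((c + 1) * ((m + 1) * n)) ≡ L [SMOD (I ^ n • ⊤ : Submodule R M)] := by
    refine SModEq.mono (smul_mono_left ?_) (hL ((m + 1) * n))
    calc J ^ ((m + 1) * n) = (J ^ (m + 1)) ^ n := by rw [pow_mul]
      _ ≤ I ^ n := Ideal.pow_right_mono hm n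
  exact h1.trans h2

/-- If `M` is precomplete for `K` and for `L`, it is precomplete for `K ⊔ L`. -/
lemma isPrecomplete_sup {K L : Ideal R} (hK : IsPrecomplete K M)
    (hL : IsPrecomplete L M) : IsPrecomplete (K ⊔ L) M := by
  constructor
  intro f hf
  -- decompose successive differences
  have hd : ∀ n : ℕ, f (2 * (n + 1)) - f (2 * n) ∈
      (K ^ n • ⊤ : Submodule R M) ⊔ (L ^ n • ⊤ : Submodule R M) := by
    intro n
    have h1 : f (2 * n) ≡ f (2 * (n + 1)) [SMOD ((K ⊔ L) ^ (2 * n) • ⊤ : Submodule R M)] :=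
      hf (by omega)
    have h2 : (K ⊔ L) ^ (2 * n) ≤ K ^ n ⊔ L ^ n := by
      have := Ideal.sup_pow_add_le_pow_sup_pow (I := K) (J := L) (n := n) (m := n)
      simpa [two_mul] using this
    have h3 : ((K ⊔ L) ^ (2 * n) • ⊤ : Submodule R M) ≤
        (K ^ n • ⊤ : Submodule R M) ⊔ (L ^ n • ⊤ : Submodule R M) := by
      rw [← sup_smul]
      exact smul_mono_left h2
    have := (SModEq.sub_mem.mp h1.symm)
    exact h3 this
  choose a ha b hb hab using fun n => Submodule.mem_sup.mp (hd n)
  -- partial sums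
  set A : ℕ → M := fun n => f 0 + ∑ k ∈ Finset.range n, a k with hA
  set B : ℕ → M := fun n => ∑ k ∈ Finset.range n, b k with hB
  have hAB : ∀ n, A n + B n = f (2 * n) := by
    intro n
    induction n with
    | zero => simp [hA, hB]
    | succ n ih =>
      have : A (n + 1) + B (n + 1) = (A n + B n) + (a n + b n) := by
        simp [hA, hB, Finset.sum_range_succ]; abel
      rw [this, ih, hab n]; abel
  have hAc : ∀ {p q : ℕ}, p ≤ q → A p ≡ A q [SMOD (K ^ p • ⊤ : Submodule R M)] := by
    intro p q hpq
    rw [SModEq.sub_mem, hA]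
    simp only
    have : (f 0 + ∑ k ∈ Finset.range p, a k) - (f 0 + ∑ k ∈ Finset.range q, a k)
        = -(∑ k ∈ Finset.Ico p q, a k) := by
      rw [← Finset.sum_range_add_sum_Ico _ hpq]; abel
    rw [this]
    refine neg_mem (Submodule.sum_mem _ fun k hk => ?_)
    exact smul_mono_left (Ideal.pow_le_pow_right (Finset.mem_Ico.mp hk).1) (ha k)
  have hBc : ∀ {p q : ℕ}, p ≤ q → B p ≡ B q [SMOD (L ^ p • ⊤ : Submodule R M)] := by
    intro p q hpq
    rw [SModEq.sub_mem, hB]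
    simp only
    have : (∑ k ∈ Finset.range p, b k) - (∑ k ∈ Finset.range q, b k)
        = -(∑ k ∈ Finset.Ico p q, b k) := by
      rw [← Finset.sum_range_add_sum_Ico _ hpq]; abel
    rw [this]
    refine neg_mem (Submodule.sum_mem _ fun k hk => ?_)
    exact smul_mono_left (Ideal.pow_le_pow_right (Finset.mem_Ico.mp hk).1) (hb k)
  obtain ⟨LA, hLA⟩ := hK.prec hAc
  obtain ⟨LB, hLB⟩ := hL.prec hBc
  refine ⟨LA + LB, fun n => ?_⟩
  have h1 : f n ≡ f (2 * n) [SMOD ((K ⊔ L) ^ n • ⊤ : Submodule R M)] := hf (by omega)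
  have h2 : f (2 * n) ≡ LA + LB [SMOD ((K ⊔ L) ^ n • ⊤ : Submodule R M)] := by
    rw [← hAB n]
    exact SModEq.add
      ((hLA n).mono (smul_mono_left (Ideal.pow_right_mono le_sup_left n)))
      ((hLB n).mono (smul_mono_left (Ideal.pow_right_mono le_sup_right n)))
  exact h1.trans h2

lemma isPrecomplete_span_finset {ι : Type*} (s : Finset ι) (x : ι → R)
    (h : ∀ i ∈ s, IsPrecomplete (Ideal.span {x i}) M) :
    IsPrecomplete (Ideal.span (x '' ↑s)) M := by
  classical
  induction s using Finset.induction with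
  | empty => simpa using (inferInstance : IsPrecomplete (⊥ : Ideal R) M)
  | @insert j s hi ih =>
    have h1 : Ideal.span (x '' ↑(insert j s)) =
        Ideal.span {x j} ⊔ Ideal.span (x '' ↑s) := by
      rw [Finset.coe_insert, Set.image_insert_eq, Ideal.span_insert]
    rw [h1]
    exact isPrecomplete_sup (h j (Finset.mem_insert_self j s))
      (ih fun i hi' => h i (Finset.mem_insert_of_mem hi'))

end Aux

/-- Let `R` be a commutative Noetherian ring, `I` an ideal, and `x_1, …, x_r ∈ R` with
`Rad (x_1,…,x_r)R = Rad I`. If an `R`-module `M` is `x_i R`-adically complete for each `i`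
and `M` is `I`-separated, then `M` is `I`-adically complete. -/
theorem stmt5 {R : Type*} [CommRing R] [IsNoetherianRing R] (I : Ideal R)
    {r : ℕ} (x : Fin r → R)
    (hx : (Ideal.span (Set.range x)).radical = I.radical)
    (M : Type*) [AddCommGroup M] [Module R M]
    (hcomp : ∀ i : Fin r, IsAdicComplete (Ideal.span {x i}) M)
    (hsep : IsHausdorff I M) :
    IsAdicComplete I M := by
  set J : Ideal R := Ideal.span (Set.range x) with hJ
  have hJprec : IsPrecomplete J M := by
    have := isPrecomplete_span_finset (M := M) (Finset.univ : Finset (Fin r)) x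
      (fun i _ => (hcomp i).toIsPrecomplete)
    simpa [hJ, Set.image_univ] using this
  have hIJ : ∃ c, I ^ c ≤ J :=
    Ideal.exists_pow_le_of_le_radical_of_fg (hx ▸ Ideal.le_radical)
      (IsNoetherian.noetherian I)
  have hJI : ∃ m, J ^ m ≤ I :=
    Ideal.exists_pow_le_of_le_radical_of_fg (hx ▸ Ideal.le_radical : J ≤ I.radical)
      (IsNoetherian.noetherian J)
  obtain ⟨c, hc⟩ := hIJ
  obtain ⟨m, hm⟩ := hJI
  have hIprec : IsPrecomplete I M :=
    isPrecomplete_of_pow_le c m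
      (le_trans (Ideal.pow_le_pow_right (Nat.le_succ c)) hc)
      (le_trans (Ideal.pow_le_pow_right (Nat.le_succ m)) hm) hJprec
  exact { toIsHausdorff := hsep, toIsPrecomplete := hIprec }
end

section
/- Let R be a commutative ring, M an R-module, and x ∈ R. Consider the inverse system {M, x} indexed by ℕ where each module is M and each transition map is multiplication by x. Then lim^i {M, x} ≅ Ext^i_R(R_x, M) for i = 0, 1, and Ext^i_R(R_x, M) = 0 for all i ≥ 2, where R_x is the localization of R at the powers of x. -/
open CategoryTheory

universe u

/-- The `i`-th Ext module `Ext^i_R(X, Y)` of two `R`-modules. -/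
noncomputable def extMod (R : Type u) [CommRing R] (i : ℕ)
    (X Y : Type u) [AddCommGroup X] [Module R X] [AddCommGroup Y] [Module R Y] :
    ModuleCat.{u} R :=
  ((Ext R (ModuleCat.{u} R) i).obj (Opposite.op (ModuleCat.of R X))).obj (ModuleCat.of R Y)

/-- For an inverse system `{N_α}` indexed by `ℕ` with transition maps `g α : N (α+1) → N α`,
the map `∏ N_α → ∏ N_α`, `s ↦ (s α - g α (s (α+1)))_α`, whose kernel is `lim N_α` and whose
cokernel is `lim¹ N_α`. -/
noncomputable def invTrans {R : Type u} [CommRing R] (N : ℕ → Type u)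
    [∀ n, AddCommGroup (N n)] [∀ n, Module R (N n)]
    (g : ∀ n : ℕ, N (n + 1) →ₗ[R] N n) : (∀ n, N n) →ₗ[R] (∀ n, N n) :=
  LinearMap.pi fun n => LinearMap.proj n - (g n).comp (LinearMap.proj (n + 1))

/-- The inverse system `{M, x}`: every module is `M` and every transition map is
multiplication by `x`. -/
noncomputable def mulxTrans {R : Type u} [CommRing R] (M : Type u) [AddCommGroup M] [Module R M]
    (x : R) : (∀ _ : ℕ, M) →ₗ[R] (∀ _ : ℕ, M) :=
  invTrans (fun _ => M) (fun _ => x • LinearMap.id)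

/-!
`R_x = R[X]/(xX - 1)`, and multiplication by `1 - xX` on `R[X]` is injective (its trailing
coefficient is `1`), so `0 → R[X] → R[X] → R_x → 0` is a free resolution of length one. Hence
`Ext^i_R(R_x, M)` vanishes for `i ≥ 2` and in degrees `0, 1` is the kernel and cokernel of
precomposition with `1 - xX` on `Hom_R(R[X], M)`. Identifying `Hom_R(R[X], M)` with `∏ₙ M` via
the monomial basis turns that precomposition into `s ↦ (sₙ - x sₙ₊₁)ₙ`, the map whose kernel and
cokernel are `lim` and `lim¹` of `{M, x}`.
-/

namespace LinearEquiv
variable {R A B A' B' : Type*} [Ring R] [AddCommGroup A] [Module R A] [AddCommGroup B]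
  [Module R B] [AddCommGroup A'] [Module R A'] [AddCommGroup B'] [Module R B']
  {φ : A →ₗ[R] B} {ψ : A' →ₗ[R] B'} (e₁ : A ≃ₗ[R] A') (e₂ : B ≃ₗ[R] B')

lemma map_ker_of_commSq (h : ψ ∘ₗ e₁ = e₂ ∘ₗ φ) :
    (LinearMap.ker φ).map (e₁ : A →ₗ[R] A') = LinearMap.ker ψ := by
  ext b
  have hb := LinearMap.congr_fun h (e₁.symm b)
  simp only [LinearMap.comp_apply, coe_coe, apply_symm_apply] at hb
  rw [Submodule.mem_map_equiv, LinearMap.mem_ker, LinearMap.mem_ker, hb, e₂.map_eq_zero_iff]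

lemma map_range_of_commSq (h : ψ ∘ₗ e₁ = e₂ ∘ₗ φ) :
    (LinearMap.range φ).map (e₂ : B →ₗ[R] B') = LinearMap.range ψ := by
  rw [← LinearMap.range_comp, ← h, LinearMap.range_comp_of_range_eq_top _ e₁.range]

noncomputable def kerEquivOfCommSq (h : ψ ∘ₗ e₁ = e₂ ∘ₗ φ) :
    LinearMap.ker φ ≃ₗ[R] LinearMap.ker ψ :=
  e₁.ofSubmodules _ _ (map_ker_of_commSq e₁ e₂ h)

noncomputable def cokerEquivOfCommSq (h : ψ ∘ₗ e₁ = e₂ ∘ₗ φ) :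
    (B ⧸ LinearMap.range φ) ≃ₗ[R] (B' ⧸ LinearMap.range ψ) :=
  Submodule.Quotient.equiv _ _ e₂ (map_range_of_commSq e₁ e₂ h)

end LinearEquiv

namespace ProjectiveResolution

variable {R : Type u} [CommRing R] {P₀ P₁ X : Type u}
  [AddCommGroup P₀] [Module R P₀] [AddCommGroup P₁] [Module R P₁] [AddCommGroup X] [Module R X]

section TwoTermComplex

noncomputable def twoTermComplex (f : P₁ →ₗ[R] P₀) : ChainComplex (ModuleCat.{u} R) ℕ :=
  ChainComplex.of
    (fun | 0 => ModuleCat.of R P₀ | 1 => ModuleCat.of R P₁ | _ + 2 => ModuleCat.of R PUnit)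
    (fun | 0 => ModuleCat.ofHom f | _ + 1 => 0)
    (fun _ => Limits.zero_comp)

variable (f : P₁ →ₗ[R] P₀)

lemma twoTermComplex_d_one_zero : (twoTermComplex f).d 1 0 = ModuleCat.ofHom f :=
  rfl

lemma isZero_twoTermComplex_X (n : ℕ) : Limits.IsZero ((twoTermComplex f).X (n + 2)) :=
  ModuleCat.isZero_of_subsingleton (ModuleCat.of R PUnit)

lemma twoTermComplex_exactAt_succ (hf : Function.Injective f) (n : ℕ) :
    (twoTermComplex f).ExactAt (n + 1) := by
  rw [HomologicalComplex.exactAt_iff' _ (n + 2) (n + 1) n (by simp) (by simp)]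
  cases n with
  | zero =>
    rw [ShortComplex.exact_iff_mono _ ((isZero_twoTermComplex_X f 0).eq_of_src _ _)]
    exact (ModuleCat.mono_iff_injective _).2 hf
  | succ n => exact ShortComplex.exact_of_isZero_X₂ _ (isZero_twoTermComplex_X f n)

instance [Module.Projective R P₀] [Module.Projective R P₁] (n : ℕ) :
    Projective ((twoTermComplex f).X n) :=
  match n with
  | 0 => inferInstanceAs (Projective (ModuleCat.of R P₀))
  | 1 => inferInstanceAs (Projective (ModuleCat.of R P₁))
  | n + 2 => (isZero_twoTermComplex_X f n).projective

variable (M : Type u) [AddCommGroup M] [Module R M]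

noncomputable abbrev twoTermHomComplex : CochainComplex (ModuleCat.{u} R) ℕ :=
  (twoTermComplex f).linearYonedaObj R (ModuleCat.of R M)

lemma isZero_twoTermHomComplex_X (n : ℕ) : Limits.IsZero ((twoTermHomComplex f M).X (n + 2)) :=
  @ModuleCat.isZero_of_subsingleton _ _ _ ⟨fun _ _ => (isZero_twoTermComplex_X f n).eq_of_src _ _⟩

lemma lcomp_comp_homLinearEquiv :
    LinearMap.lcomp R M f ∘ₗ ModuleCat.homLinearEquiv.toLinearMap =
      ModuleCat.homLinearEquiv.toLinearMap ∘ₗ ((twoTermHomComplex f M).d 0 1).hom :=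
  rfl

end TwoTermComplex

variable [Module.Projective R P₀] [Module.Projective R P₁] {f : P₁ →ₗ[R] P₀} {g : P₀ →ₗ[R] X}
  (hf : Function.Injective f) (hfg : Function.Exact f g) (hg : Function.Surjective g)
include hf hfg hg

noncomputable def ofShortExact : ProjectiveResolution (ModuleCat.of R X) where
  complex := twoTermComplex f
  π := (ChainComplex.toSingle₀Equiv _ _).symm ⟨ModuleCat.ofHom g, by
    rw [twoTermComplex_d_one_zero]; ext a; exact hfg.apply_apply_eq_zero a⟩
  quasiIso := ⟨fun n => by
    cases n with
    | zero =>
      rw [ChainComplex.quasiIsoAt₀_iff, ShortComplex.quasiIso_iff_of_zeros']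
      · exact ⟨(ShortComplex.ShortExact.moduleCat_exact_iff_function_exact _).2 hfg,
          (ModuleCat.epi_iff_surjective _).2 hg⟩
      all_goals rfl
    | succ n =>
      rw [quasiIsoAt_iff_exactAt' _ _ (ChainComplex.exactAt_succ_single_obj _ _)]
      exact twoTermComplex_exactAt_succ f hf n⟩

variable (M : Type u) [AddCommGroup M] [Module R M]

noncomputable def extModZeroEquivKerLcomp :
    extMod R 0 X M ≃ₗ[R] LinearMap.ker (LinearMap.lcomp R M f) :=
  ((ofShortExact hf hfg hg).isoExt 0 (ModuleCat.of R M) ≪≫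
    (twoTermHomComplex f M).isoHomologyπ₀.symm ≪≫
    (twoTermHomComplex f M).cyclesIsoSc' 0 0 1 (by simp) (by simp) ≪≫
    ((twoTermHomComplex f M).sc' 0 0 1).moduleCatCyclesIso).toLinearEquiv.trans
    (LinearEquiv.kerEquivOfCommSq _ _ (lcomp_comp_homLinearEquiv f M))

noncomputable def extModOneEquivCokerLcomp :
    extMod R 1 X M ≃ₗ[R] (P₁ →ₗ[R] M) ⧸ LinearMap.range (LinearMap.lcomp R M f) :=
  ((ofShortExact hf hfg hg).isoExt 1 (ModuleCat.of R M) ≪≫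
    (twoTermHomComplex f M).isoHomologyι 1 2 (by simp)
      ((isZero_twoTermHomComplex_X f M 0).eq_of_tgt _ _) ≪≫
    (twoTermHomComplex f M).opcyclesIsoSc' 0 1 2 (by simp) (by simp) ≪≫
    ((twoTermHomComplex f M).sc' 0 1 2).moduleCatOpcyclesIso).toLinearEquiv.trans
    (LinearEquiv.cokerEquivOfCommSq _ _ (lcomp_comp_homLinearEquiv f M))

lemma subsingleton_extMod_add_two (n : ℕ) : Subsingleton (extMod R (n + 2) X M) := by
  refine ModuleCat.subsingleton_of_isZero (Limits.IsZero.of_iso ?_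
    ((ofShortExact hf hfg hg).isoExt (n + 2) (ModuleCat.of R M)))
  rw [← HomologicalComplex.exactAt_iff_isZero_homology,
    HomologicalComplex.exactAt_iff' _ (n + 1) (n + 2) (n + 3) (by simp) (by simp)]
  exact ShortComplex.exact_of_isZero_X₂ _ (isZero_twoTermHomComplex_X f M n)

end ProjectiveResolution

open Polynomial

variable {R : Type u} [CommRing R] (x : R)

lemma Polynomial.injective_mulLeft_one_sub_C_mul_X :
    Function.Injective (LinearMap.mulLeft R (1 - C x * X)) := by
  have htrail : (1 - C x * X).trailingCoeff = 1 := by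
    nontriviality R
    rw [trailingCoeff, natTrailingDegree_eq_zero.mpr (Or.inr (by simp))]
    simp
  exact (isRegular_iff_mem_nonZeroDivisors.2
    (mem_nonZeroDivisors_of_trailingCoeff (htrail ▸ one_mem _))).left

noncomputable def Localization.Away.mkPolynomial : R[X] →ₐ[R] Localization.Away x :=
  (Localization.awayEquivAdjoin x).symm.toAlgHom.comp (AdjoinRoot.mkₐ _)

lemma Localization.Away.mkPolynomial_surjective :
    Function.Surjective (Localization.Away.mkPolynomial x).toLinearMap :=
  (Localization.awayEquivAdjoin x).symm.surjective.comp AdjoinRoot.mk_surjective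

lemma Localization.Away.exact_mulLeft_mkPolynomial :
    Function.Exact (LinearMap.mulLeft R (1 - C x * X))
      (Localization.Away.mkPolynomial x).toLinearMap := by
  intro p
  rw [AlgHom.coe_toLinearMap, Localization.Away.mkPolynomial, AlgHom.comp_apply, AdjoinRoot.coe_mkₐ,
    AlgEquiv.coe_toAlgHom, map_eq_zero_iff _ (AlgEquiv.injective _),
    AdjoinRoot.mk_eq_zero, ← neg_sub, neg_dvd]
  exact ⟨fun ⟨c, hc⟩ => ⟨c, hc.symm⟩, fun ⟨c, hc⟩ => ⟨c, hc.symm⟩⟩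

variable (M : Type u) [AddCommGroup M] [Module R M]

lemma mulxTrans_comp_constr_symm :
    mulxTrans M x ∘ₗ ((basisMonomials R).constr R).symm.toLinearMap =
      ((basisMonomials R).constr R).symm.toLinearMap ∘ₗ
        LinearMap.lcomp R M (LinearMap.mulLeft R (1 - C x * X)) := by
  ext φ n
  change φ (monomial n 1) - x • φ (monomial (n + 1) 1) = φ ((1 - C x * X) * monomial n 1)
  rw [sub_mul, one_mul, mul_assoc, X_mul_monomial, C_mul_monomial, ← smul_eq_mul, ← smul_monomial,
    map_sub, map_smul]

/-- Let `R` be a commutative ring, `M` an `R`-module and `x ∈ R`. For the inverse system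
`{M, x}` (all modules `M`, transition maps multiplication by `x`) one has
`lim {M, x} ≅ Hom_R(R_x, M) = Ext^0_R(R_x, M)`, `lim¹ {M, x} ≅ Ext^1_R(R_x, M)`, and
`Ext^i_R(R_x, M) = 0` for all `i ≥ 2`, where `R_x` is the localization of `R` at the
powers of `x`. -/
theorem stmt6 (R : Type u) [CommRing R] (M : Type u) [AddCommGroup M] [Module R M] (x : R) :
    Nonempty ((LinearMap.ker (mulxTrans M x)) ≃ₗ[R] (extMod R 0 (Localization.Away x) M)) ∧
    Nonempty (((∀ _ : ℕ, M) ⧸ LinearMap.range (mulxTrans M x)) ≃ₗ[R]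
      (extMod R 1 (Localization.Away x) M)) ∧
    ∀ i : ℕ, 2 ≤ i → Subsingleton (extMod R i (Localization.Away x) M) := by
  have hf := Polynomial.injective_mulLeft_one_sub_C_mul_X x
  have hfg := Localization.Away.exact_mulLeft_mkPolynomial x
  have hg := Localization.Away.mkPolynomial_surjective x
  have hsq := mulxTrans_comp_constr_symm x M
  refine ⟨⟨?_⟩, ⟨?_⟩, fun i hi => ?_⟩
  · exact ((ProjectiveResolution.extModZeroEquivKerLcomp hf hfg hg M).trans
      (LinearEquiv.kerEquivOfCommSq _ _ hsq)).symm
  · exact ((ProjectiveResolution.extModOneEquivCokerLcomp hf hfg hg M).trans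
      (LinearEquiv.cokerEquivOfCommSq _ _ hsq)).symm
  · obtain ⟨n, rfl⟩ := Nat.exists_eq_add_of_le' hi
    exact ProjectiveResolution.subsingleton_extMod_add_two hf hfg hg M n
end

section
/- Let R be a commutative ring, I an ideal, M an arbitrary R-module, and F a flat R-module with F ⊗_R R/I = 0. Then Ext^i_R(F, \hat{M}^I) = 0 for all i ≥ 0, where \hat{M}^I = lim_α M/I^α M is the I-adic completion of M. -/
/-!
Let `P → F` be a projective resolution. All syzygies of `P` are flat because `F` is, so
`Q ⊗ P → Q ⊗ F` stays exact for every `Q`; when `Q ⊗ F = 0` the projectivity of the `P n` then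
yields a contracting homotopy `s n : P n → Q ⊗ P (n + 1)` for the maps `x ↦ q ⊗ x`. For
`Q = R ⧸ J`, `q = 1` and `N` killed by `J`, the map `N → (R ⧸ J) ⊗ N` has a retraction, and
composing with the homotopy shows that `Hom(P, N)` is acyclic. This applies to `N = M ⧸ Iⁿ M`
with `J = Iⁿ`, since `F = I F` forces `F = Iⁿ F`.

Finally `Hom(P, M̂)` is the limit of the `Hom(P, M ⧸ Iⁿ M)`. A cocycle `G` with values in `M̂` has
primitives `hₙ` at every finite stage; they are made compatible one stage at a time, correcting
`hₙ₊₁` by a cocycle that lifts the discrepancy with `hₙ`. Such lifts exist because cocycles of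
`Hom(P, M ⧸ Iⁿ M)` are coboundaries and `P` is projective, while `M ⧸ Iⁿ⁺¹ M → M ⧸ Iⁿ M` is
onto; this is the vanishing of `lim¹`.
-/

open CategoryTheory TensorProduct

universe u

section Modules

variable {R : Type u} [CommRing R] {A B C D N Q : Type u}
  [AddCommGroup A] [Module R A] [AddCommGroup B] [Module R B] [AddCommGroup C] [Module R C]
  [AddCommGroup D] [Module R D] [AddCommGroup N] [Module R N] [AddCommGroup Q] [Module R Q]

theorem Module.Flat.ker_of_surjective [Module.Flat R B] [Module.Flat R C] (g : B →ₗ[R] C)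
    (hg : Function.Surjective g) : Module.Flat R (LinearMap.ker g) := by
  rw [Module.Flat.iff_rTensor_injective']
  intro J
  have hpure := LinearMap.lTensor_injective_of_exact_of_flat g hg _
    (LinearMap.ker g).injective_subtype (LinearMap.exact_subtype_ker_map g) J
  have hB := Module.Flat.rTensor_preserves_injective_linearMap (M := B) J.subtype
    J.injective_subtype
  refine Function.Injective.of_comp (f := (LinearMap.ker g).subtype.lTensor R) ?_
  rw [← LinearMap.coe_comp, LinearMap.lTensor_comp_rTensor, ← LinearMap.rTensor_comp_lTensor]
  exact hB.comp hpure

theorem Function.Exact.lTensor_of_flat_of_surjective [Module.Flat R D] {f : A →ₗ[R] B}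
    {g : B →ₗ[R] C} {h : C →ₗ[R] D} (hfg : Function.Exact f g) (hgh : Function.Exact g h)
    (hh : Function.Surjective h) (Q : Type u) [AddCommGroup Q] [Module R Q] :
    Function.Exact (f.lTensor Q) (g.lTensor Q) := by
  have hker : LinearMap.range g = LinearMap.ker h := hgh.linearMap_ker_eq.symm
  have hincl : Function.Injective ((LinearMap.range g).subtype.lTensor Q) :=
    LinearMap.lTensor_injective_of_exact_of_flat h hh _ (LinearMap.range g).injective_subtype
      (hker ▸ LinearMap.exact_subtype_ker_map h) Q
  have hfg' : Function.Exact f g.rangeRestrict :=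
    ((LinearMap.range g).injective_subtype.comp_exact_iff_exact).mp hfg
  rw [show g = (LinearMap.range g).subtype ∘ₗ g.rangeRestrict from rfl, LinearMap.lTensor_comp,
    hincl.comp_exact_iff_exact]
  exact lTensor_exact Q hfg' g.surjective_rangeRestrict

theorem Module.exists_comp_eq_of_range_le [Module.Projective R B] (f : A →ₗ[R] C)
    (g : B →ₗ[R] C) (h : LinearMap.range g ≤ LinearMap.range f) : ∃ t : B →ₗ[R] A, f ∘ₗ t = g := by
  obtain ⟨t, ht⟩ := Module.projective_lifting_property f.rangeRestrict
    (g.codRestrict _ fun x => h ⟨x, rfl⟩) f.surjective_rangeRestrict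
  refine ⟨t, ?_⟩
  rw [show f = (LinearMap.range f).subtype ∘ₗ f.rangeRestrict from rfl, LinearMap.comp_assoc, ht]
  rfl

theorem exists_lTensor_homotopy_succ [Module.Projective R B] (q : Q) {f : A →ₗ[R] B}
    {g : B →ₗ[R] C} {e : C →ₗ[R] D} (hfg : Function.Exact (f.lTensor Q) (g.lTensor Q))
    (heg : e ∘ₗ g = 0) {s : C →ₗ[R] Q ⊗[R] B} {s' : D →ₗ[R] Q ⊗[R] C}
    (hs : g.lTensor Q ∘ₗ s + s' ∘ₗ e = TensorProduct.mk R Q C q) :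
    ∃ t : B →ₗ[R] Q ⊗[R] A, f.lTensor Q ∘ₗ t + s ∘ₗ g = TensorProduct.mk R Q B q := by
  suffices h : LinearMap.range (TensorProduct.mk R Q B q - s ∘ₗ g) ≤
      LinearMap.range (f.lTensor Q) by
    obtain ⟨t, ht⟩ := Module.exists_comp_eq_of_range_le _ _ h
    exact ⟨t, by rw [ht, sub_add_cancel]⟩
  rintro _ ⟨x, rfl⟩
  refine (hfg _).mp ?_
  have hx := LinearMap.congr_fun hs (g x)
  have hegx : e (g x) = 0 := LinearMap.congr_fun heg x
  simp only [LinearMap.add_apply, LinearMap.comp_apply, hegx, map_zero, add_zero] at hx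
  simp [hx]

theorem comp_eq_of_lTensor_homotopy (q : Q) {f : A →ₗ[R] B} {g : B →ₗ[R] C}
    {t : B →ₗ[R] Q ⊗[R] A} {s : C →ₗ[R] Q ⊗[R] B}
    (hst : f.lTensor Q ∘ₗ t + s ∘ₗ g = TensorProduct.mk R Q B q)
    {ε : Q ⊗[R] N →ₗ[R] N} (hε : ε ∘ₗ TensorProduct.mk R Q N q = LinearMap.id)
    {φ : B →ₗ[R] N} (hφ : φ ∘ₗ f = 0) : (ε ∘ₗ φ.lTensor Q ∘ₗ s) ∘ₗ g = φ := by
  ext x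
  have hx := LinearMap.congr_fun hst x
  have hφx := LinearMap.congr_fun hε (φ x)
  have hφt : φ.lTensor Q (f.lTensor Q (t x)) = 0 := by
    rw [← LinearMap.comp_apply, ← LinearMap.lTensor_comp, hφ, LinearMap.lTensor_zero,
      LinearMap.zero_apply]
  simp only [LinearMap.add_apply, LinearMap.comp_apply, TensorProduct.mk_apply] at hx hφx
  calc ε (φ.lTensor Q (s (g x)))
      = ε (φ.lTensor Q (f.lTensor Q (t x) + s (g x))) := by rw [map_add _ (f.lTensor Q _), hφt,
        zero_add]
    _ = φ x := by rw [hx, LinearMap.lTensor_tmul, hφx, LinearMap.id_apply]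

theorem eq_zero_of_lTensor_comp_eq (q : Q) {f : A →ₗ[R] B} {t : B →ₗ[R] Q ⊗[R] A}
    (ht : f.lTensor Q ∘ₗ t = TensorProduct.mk R Q B q)
    {ε : Q ⊗[R] N →ₗ[R] N} (hε : ε ∘ₗ TensorProduct.mk R Q N q = LinearMap.id)
    {φ : B →ₗ[R] N} (hφ : φ ∘ₗ f = 0) : φ = 0 := by
  simpa using (comp_eq_of_lTensor_homotopy q (g := LinearMap.id) (s := 0)
    (by rwa [LinearMap.zero_comp, add_zero]) hε hφ).symm

theorem Module.IsTorsionBySet.exists_retraction_mk {J : Ideal R}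
    (hN : Module.IsTorsionBySet R N J) :
    ∃ ε : (R ⧸ J) ⊗[R] N →ₗ[R] N, ε ∘ₗ TensorProduct.mk R (R ⧸ J) N 1 = LinearMap.id := by
  have hle : J • (⊤ : Submodule R N) ≤ LinearMap.ker LinearMap.id :=
    Submodule.smul_le.mpr fun r hr y _ => @hN y ⟨r, hr⟩
  refine ⟨Submodule.liftQ (J • ⊤) LinearMap.id hle ∘ₗ (quotTensorEquivQuotSMul N J).toLinearMap, ?_⟩
  rw [LinearMap.comp_assoc, quotTensorEquivQuotSMul_comp_mk, Submodule.liftQ_mkQ]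

end Modules

namespace AdicCompletion

variable {R : Type u} [CommRing R] (I : Ideal R) {M : Type u} [AddCommGroup M] [Module R M]
  {U V W : Type u} [AddCommGroup U] [Module R U] [AddCommGroup V] [Module R V]
  [AddCommGroup W] [Module R W]

lemma exists_compatible_family {p : ∀ n : ℕ, (W →ₗ[R] M ⧸ (I ^ n • ⊤ : Submodule R M)) → Prop}
    (hp0 : ∃ h, p 0 h)
    (step : ∀ n h, p n h → ∃ h', p (n + 1) h' ∧ transitionMap I M n.le_succ ∘ₗ h' = h) :
    ∃ f : ∀ n : ℕ, W →ₗ[R] M ⧸ (I ^ n • ⊤ : Submodule R M), (∀ n, p n (f n)) ∧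
      ∀ {m n : ℕ} (hle : m ≤ n), transitionMap I M hle ∘ₗ f n = f m := by
  choose next hnext hcomp using step
  let f : ∀ n, {h // p n h} := fun n =>
    Nat.rec ⟨hp0.choose, hp0.choose_spec⟩ (fun n h => ⟨next n h.1 h.2, hnext n h.1 h.2⟩) n
  exact ⟨fun n => (f n).1, fun n => (f n).2, fun hle =>
    IsAdicComplete.StrictMono.factorPow_comp_eq_of_factorPow_comp_succ_eq (I := I) strictMono_id
      (fun n => (f n).1) (fun {m} => hcomp m _ _) hle⟩

lemma eq_zero_of_forall_quotient {du : U →ₗ[R] V}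
    (hV : ∀ (n : ℕ) (g : V →ₗ[R] M ⧸ (I ^ n • ⊤ : Submodule R M)), g ∘ₗ du = 0 → g = 0)
    (G : V →ₗ[R] AdicCompletion I M) (hG : G ∘ₗ du = 0) : G = 0 := by
  ext x n
  exact LinearMap.congr_fun (hV n (eval I M n ∘ₗ G) (by rw [LinearMap.comp_assoc, hG,
    LinearMap.comp_zero])) x

theorem exists_comp_eq_of_forall_quotient {du : U →ₗ[R] V} {dv : V →ₗ[R] W}
    (hV : ∀ (n : ℕ) (g : V →ₗ[R] M ⧸ (I ^ n • ⊤ : Submodule R M)), g ∘ₗ du = 0 →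
      ∃ h, h ∘ₗ dv = g)
    (hW : ∀ (n : ℕ) (z : W →ₗ[R] M ⧸ (I ^ n • ⊤ : Submodule R M)), z ∘ₗ dv = 0 →
      ∃ z', z' ∘ₗ dv = 0 ∧ transitionMap I M n.le_succ ∘ₗ z' = z)
    (G : V →ₗ[R] AdicCompletion I M) (hG : G ∘ₗ du = 0) : ∃ H, H ∘ₗ dv = G := by
  have hGn (n : ℕ) : (eval I M n ∘ₗ G) ∘ₗ du = 0 := by
    rw [LinearMap.comp_assoc, hG, LinearMap.comp_zero]
  have hp0 : ∃ h : W →ₗ[R] M ⧸ (I ^ 0 • ⊤ : Submodule R M), h ∘ₗ dv = eval I M 0 ∘ₗ G := by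
    have : Subsingleton (M ⧸ (I ^ 0 • ⊤ : Submodule R M)) := by
      rw [Submodule.Quotient.subsingleton_iff, pow_zero, Ideal.one_eq_top, Submodule.top_smul]
    exact ⟨0, Subsingleton.elim _ _⟩
  obtain ⟨f, hf, hcompat⟩ :=
    exists_compatible_family I (p := fun n h => h ∘ₗ dv = eval I M n ∘ₗ G) hp0 fun n h hh => by
    obtain ⟨h', hh'⟩ := hV (n + 1) _ (hGn (n + 1))
    obtain ⟨z, hz, hzh⟩ := hW n (transitionMap I M n.le_succ ∘ₗ h' - h) (by
      rw [LinearMap.sub_comp, LinearMap.comp_assoc, hh', hh, ← LinearMap.comp_assoc,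
        transitionMap_comp_eval, sub_self])
    refine ⟨h' - z, by rw [LinearMap.sub_comp, hz, sub_zero, hh'], ?_⟩
    rw [LinearMap.comp_sub, hzh, sub_sub_cancel]
  exact ⟨lift I f hcompat, by ext x n; exact LinearMap.congr_fun (hf n) x⟩

end AdicCompletion

namespace CategoryTheory.ProjectiveResolution

variable {R : Type u} [CommRing R] {X : ModuleCat.{u} R} (P : ProjectiveResolution X)

abbrev d (n : ℕ) : P.complex.X (n + 1) →ₗ[R] P.complex.X n := (P.complex.d (n + 1) n).hom

noncomputable abbrev π₀ : P.complex.X 0 →ₗ[R] X := (P.π.f 0).hom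

instance (n : ℕ) : Module.Projective R (P.complex.X n) :=
  (IsProjective.iff_projective _).mpr (P.projective n)

lemma surjective_π₀ : Function.Surjective P.π₀ :=
  (ModuleCat.epi_iff_surjective (P.π.f 0)).mp inferInstance

lemma exact_d_π₀ : Function.Exact (P.d 0) P.π₀ :=
  LinearMap.exact_iff.mpr ((ShortComplex.moduleCat_exact_iff_range_eq_ker _).mp P.exact₀).symm

lemma exact_d (n : ℕ) : Function.Exact (P.d (n + 1)) (P.d n) :=
  LinearMap.exact_iff.mpr ((ShortComplex.moduleCat_exact_iff_range_eq_ker _).mp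
    (P.exact_succ n)).symm

lemma exists_lTensor_d_zero_comp_eq {Q : Type u} [AddCommGroup Q] [Module R Q]
    (hX : Subsingleton (Q ⊗[R] X)) (q : Q) :
    ∃ s : P.complex.X 0 →ₗ[R] Q ⊗[R] P.complex.X 1,
      (P.d 0).lTensor Q ∘ₗ s = TensorProduct.mk R Q _ q := by
  have hsurj : Function.Surjective ((P.d 0).lTensor Q) :=
    (LinearMap.surjective_iff_eq_zero_of_exact
      (lTensor_exact Q P.exact_d_π₀ P.surjective_π₀)).mpr (Subsingleton.elim _ _)
  exact Module.projective_lifting_property _ _ hsurj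

def HomAcyclic (N : Type u) [AddCommGroup N] [Module R N] : Prop :=
  (∀ g : P.complex.X 0 →ₗ[R] N, g ∘ₗ P.d 0 = 0 → g = 0) ∧
    ∀ (n : ℕ) (g : P.complex.X (n + 1) →ₗ[R] N), g ∘ₗ P.d (n + 1) = 0 →
      ∃ h : P.complex.X n →ₗ[R] N, h ∘ₗ P.d n = g

lemma homAcyclic_adicCompletion (I : Ideal R) (M : Type u) [AddCommGroup M] [Module R M]
    (h : ∀ n : ℕ, P.HomAcyclic (M ⧸ (I ^ n • ⊤ : Submodule R M))) :
    P.HomAcyclic (AdicCompletion I M) := by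
  refine ⟨AdicCompletion.eq_zero_of_forall_quotient I fun n => (h n).1,
    fun n => AdicCompletion.exists_comp_eq_of_forall_quotient I (fun k => (h k).2 n) ?_⟩
  intro k z hz
  cases n with
  | zero => exact ⟨0, LinearMap.zero_comp _, by rw [LinearMap.comp_zero, (h k).1 z hz]⟩
  | succ n =>
    obtain ⟨w, rfl⟩ := (h k).2 n z hz
    obtain ⟨w', hw'⟩ := Module.projective_lifting_property
      (AdicCompletion.transitionMap I M k.le_succ) w (Submodule.factor_surjective _)
    refine ⟨w' ∘ₗ P.d n, ?_, by rw [← LinearMap.comp_assoc, hw']⟩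
    rw [LinearMap.comp_assoc, (P.exact_d n).linearMap_comp_eq_zero, LinearMap.comp_zero]

lemma exactAt_linearYonedaObj_of_homAcyclic {Y : ModuleCat.{u} R} (h : P.HomAcyclic Y) (i : ℕ) :
    (P.complex.linearYonedaObj R Y).ExactAt i := by
  cases i with
  | zero =>
    rw [HomologicalComplex.exactAt_iff' _ 0 0 1 (by simp [CochainComplex.prev_nat_zero])
      (by simp [CochainComplex.next]), ShortComplex.moduleCat_exact_iff]
    intro G hG
    refine ⟨0, ?_⟩
    rw [map_zero]
    exact (ModuleCat.hom_ext (h.1 G.hom congr(($hG).hom))).symm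
  | succ n =>
    rw [HomologicalComplex.exactAt_iff' _ n (n + 1) (n + 2)
      (by simp [CochainComplex.prev_nat_succ]) (by simp [CochainComplex.next]),
      ShortComplex.moduleCat_exact_iff]
    intro G hG
    obtain ⟨H, hH⟩ := h.2 n G.hom congr(($hG).hom)
    exact ⟨ModuleCat.ofHom H, congrArg ModuleCat.ofHom hH⟩

lemma subsingleton_ext_of_homAcyclic {Y : ModuleCat.{u} R} (h : P.HomAcyclic Y) (i : ℕ) :
    Subsingleton (((Ext R (ModuleCat.{u} R) i).obj (Opposite.op X)).obj Y) :=
  ModuleCat.subsingleton_of_isZero <| (P.isoExt i Y).isZero_iff.mpr <|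
    (HomologicalComplex.exactAt_iff_isZero_homology _ _).mp
      (P.exactAt_linearYonedaObj_of_homAcyclic h i)

section Flat

variable [Module.Flat R X]

lemma flat_range_d (n : ℕ) : Module.Flat R (LinearMap.range (P.d n)) := by
  induction n with
  | zero =>
    rw [← P.exact_d_π₀.linearMap_ker_eq]
    exact Module.Flat.ker_of_surjective _ P.surjective_π₀
  | succ n ih =>
    rw [← (P.exact_d n).linearMap_ker_eq, ← LinearMap.ker_rangeRestrict]
    exact Module.Flat.ker_of_surjective _ (P.d n).surjective_rangeRestrict

lemma exact_lTensor_d (Q : Type u) [AddCommGroup Q] [Module R Q] (n : ℕ) :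
    Function.Exact ((P.d (n + 1)).lTensor Q) ((P.d n).lTensor Q) := by
  cases n with
  | zero => exact (P.exact_d 0).lTensor_of_flat_of_surjective P.exact_d_π₀ P.surjective_π₀ Q
  | succ n =>
    have := P.flat_range_d n
    exact (P.exact_d (n + 1)).lTensor_of_flat_of_surjective
      ((LinearMap.range (P.d n)).injective_subtype.comp_exact_iff_exact.mp (P.exact_d n))
      (P.d n).surjective_rangeRestrict Q

lemma exists_lTensor_homotopy {Q : Type u} [AddCommGroup Q] [Module R Q]
    (hX : Subsingleton (Q ⊗[R] X)) (q : Q) (n : ℕ) :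
    ∃ (s : P.complex.X n →ₗ[R] Q ⊗[R] P.complex.X (n + 1))
      (t : P.complex.X (n + 1) →ₗ[R] Q ⊗[R] P.complex.X (n + 2)),
      (P.d (n + 1)).lTensor Q ∘ₗ t + s ∘ₗ P.d n = TensorProduct.mk R Q _ q := by
  induction n with
  | zero =>
    obtain ⟨s, hs⟩ := P.exists_lTensor_d_zero_comp_eq hX q
    exact ⟨s, exists_lTensor_homotopy_succ q (P.exact_lTensor_d Q 0)
      P.exact_d_π₀.linearMap_comp_eq_zero (s' := 0) (by rw [LinearMap.zero_comp, add_zero, hs])⟩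
  | succ n ih =>
    obtain ⟨s, t, hst⟩ := ih
    exact ⟨t, exists_lTensor_homotopy_succ q (P.exact_lTensor_d Q (n + 1))
      (P.exact_d n).linearMap_comp_eq_zero hst⟩

lemma homAcyclic_of_isTorsionBySet {J : Ideal R} (hX : Subsingleton ((R ⧸ J) ⊗[R] X))
    {N : Type u} [AddCommGroup N] [Module R N] (hN : Module.IsTorsionBySet R N J) :
    P.HomAcyclic N := by
  obtain ⟨ε, hε⟩ := hN.exists_retraction_mk
  refine ⟨fun g hg => ?_, fun n g hg => ?_⟩
  · obtain ⟨s, hs⟩ := P.exists_lTensor_d_zero_comp_eq hX 1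
    exact eq_zero_of_lTensor_comp_eq 1 hs hε hg
  · obtain ⟨s, t, hst⟩ := P.exists_lTensor_homotopy hX 1 n
    exact ⟨_, comp_eq_of_lTensor_homotopy 1 hst hε hg⟩

end Flat

end CategoryTheory.ProjectiveResolution

theorem subsingleton_quot_pow_tensor {R : Type u} [CommRing R] {I : Ideal R} {F : Type u}
    [AddCommGroup F] [Module R F] (hF : Subsingleton (F ⊗[R] (R ⧸ I))) (n : ℕ) :
    Subsingleton ((R ⧸ I ^ n) ⊗[R] F) := by
  have hI : I • (⊤ : Submodule R F) = ⊤ :=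
    Submodule.Quotient.subsingleton_iff.mp (tensorQuotEquivQuotSMul F I).symm.subsingleton
  have hIn : I ^ n • (⊤ : Submodule R F) = ⊤ := by
    induction n with
    | zero => rw [pow_zero, Ideal.one_eq_top, Submodule.top_smul]
    | succ n ih => rw [pow_succ, mul_smul, hI, ih]
  have := Submodule.Quotient.subsingleton_iff.mpr hIn
  exact (quotTensorEquivQuotSMul F (I ^ n)).subsingleton

/-- Let `R` be a commutative ring, `I` an ideal, `M` an arbitrary `R`-module, and `F` a flat
`R`-module with `F ⊗_R R/I = 0`. Then `Ext^i_R(F, \hat{M}^I) = 0` for all `i ≥ 0`, where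
`\hat{M}^I = lim_α M/I^α M` is the `I`-adic completion of `M`. -/
theorem stmt13 (R : Type u) [CommRing R] (I : Ideal R)
    (M : Type u) [AddCommGroup M] [Module R M]
    (F : Type u) [AddCommGroup F] [Module R F] [Module.Flat R F]
    (hF : Subsingleton (F ⊗[R] (R ⧸ I))) :
    ∀ i : ℕ, Subsingleton (extMod R i F (AdicCompletion I M)) := by
  obtain ⟨P⟩ : Nonempty (ProjectiveResolution (ModuleCat.of R F)) := HasProjectiveResolution.out
  exact P.subsingleton_ext_of_homAcyclic <| P.homAcyclic_adicCompletion I M fun n =>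
    P.homAcyclic_of_isTorsionBySet (subsingleton_quot_pow_tensor hF n)
      (Module.isTorsionBySet_quotient_ideal_smul M (I ^ n))
end

section
/- Let R be a commutative Noetherian ring, I an ideal, and M an R-module. For any α ≥ 1, the natural map M/I^α M → \hat{M}^I / I^α \hat{M}^I is an isomorphism; in particular the I-adic completion \hat{M}^I of an arbitrary module M is itself I-adically complete. -/
/-!
Since `I ^ α` is finitely generated, say by `s₁, …, sₖ`, an element of `\hat{M}^I` that vanishes
modulo `I ^ α` can be written as `∑ sᵢ • yᵢ`, by splitting the successive differences of a
representing Cauchy sequence along the generators (`AdicCompletion.pow_smul_top_eq_ker_eval`).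
So evaluation at level `α` identifies `\hat{M}^I / I ^ α \hat{M}^I` with `M / I ^ α M`, and this
also makes `\hat{M}^I` complete.
-/

/-- The natural map `M/I^α M → \hat{M}^I / I^α \hat{M}^I` induced by the canonical map
`M → \hat{M}^I` into the `I`-adic completion. -/
noncomputable def completionModMap (R : Type*) [CommRing R] (I : Ideal R)
    (M : Type*) [AddCommGroup M] [Module R M] (α : ℕ) :
    (M ⧸ (I ^ α • ⊤ : Submodule R M)) →ₗ[R]
      (AdicCompletion I M ⧸ (I ^ α • ⊤ : Submodule R (AdicCompletion I M))) :=
  Submodule.mapQ _ _ (AdicCompletion.of I M) (by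
    rw [← Submodule.map_le_iff_le_comap, Submodule.map_smul'']
    exact Submodule.smul_mono le_rfl le_top)

namespace AdicCompletion

variable {R : Type*} [CommRing R] {I : Ideal R} {M : Type*} [AddCommGroup M] [Module R M]

noncomputable def evalModPowSMul (h : I.FG) (α : ℕ) :
    (AdicCompletion I M ⧸ (I ^ α • ⊤ : Submodule R (AdicCompletion I M))) →ₗ[R]
      (M ⧸ (I ^ α • ⊤ : Submodule R M)) :=
  Submodule.liftQ _ (eval I M α) (pow_smul_top_eq_ker_eval h).le

theorem evalModPowSMul_bijective (h : I.FG) (α : ℕ) :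
    Function.Bijective (evalModPowSMul (M := M) h α) :=
  ⟨LinearMap.ker_eq_bot.mp (Submodule.ker_liftQ_eq_bot' _ _ (pow_smul_top_eq_ker_eval h)),
    fun y => by
      obtain ⟨x, rfl⟩ := eval_surjective I M α y
      exact ⟨Submodule.Quotient.mk x, rfl⟩⟩

theorem evalModPowSMul_comp_completionModMap (h : I.FG) (α : ℕ) :
    evalModPowSMul h α ∘ₗ completionModMap R I M α = LinearMap.id := by
  ext x
  rfl

theorem completionModMap_bijective (h : I.FG) (α : ℕ) :
    Function.Bijective (completionModMap R I M α) := by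
  rw [← (evalModPowSMul_bijective h α).of_comp_iff', ← LinearMap.coe_comp,
    evalModPowSMul_comp_completionModMap, LinearMap.id_coe]
  exact Function.bijective_id

end AdicCompletion

/-- Let `R` be a commutative Noetherian ring, `I` an ideal, and `M` an `R`-module. For any
`α ≥ 1` the natural map `M/I^α M → \hat{M}^I / I^α \hat{M}^I` is an isomorphism; in
particular the `I`-adic completion `\hat{M}^I` of an arbitrary module `M` is itself
`I`-adically complete. -/
theorem stmt18 (R : Type*) [CommRing R] [IsNoetherianRing R] (I : Ideal R)
    (M : Type*) [AddCommGroup M] [Module R M] :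
    (∀ α : ℕ, 1 ≤ α → Function.Bijective (completionModMap R I M α)) ∧
      IsAdicComplete I (AdicCompletion I M) :=
  ⟨fun α _ => AdicCompletion.completionModMap_bijective I.fg_of_isNoetherianRing α,
    AdicCompletion.isAdicComplete I.fg_of_isNoetherianRing⟩
end

section
/- Let R be a commutative ring, M an R-module, x ∈ R, and N = ∪_{α≥1}(0 :_M x^α). Suppose N = 0 :_M x (i.e. xN = 0). Then there is an exact sequence 0 → lim{M/N, x} → M → \hat{M}^{xR} → lim^1{M/N, x} → 0, where {M/N, x} is the inverse system with all modules M/N and transition maps multiplication by x, and \hat{M}^{xR} = lim_α M/x^α M. -/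
universe u

namespace Stmt19Aux

variable {R : Type u} [CommRing R] {M : Type u} [AddCommGroup M] [Module R M]
  (x : R) (N : Submodule R M)

open Pointwise in
theorem mem_pow_smul_top_iff (α : ℕ) (m : M) :
    m ∈ ((Ideal.span {x})^α • ⊤ : Submodule R M) ↔ ∃ v, x^α • v = m := by
  rw [Ideal.span_singleton_pow, Submodule.ideal_span_singleton_smul]
  simp [← SetLike.mem_coe, Set.mem_smul_set]

/-- `μ α : M⧸N → M` is "multiplication by `x^(α+1)`". -/
noncomputable def mu (hx : ∀ m ∈ N, x • m = 0) (α : ℕ) : (M ⧸ N) →ₗ[R] M :=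
  N.liftQ (x ^ (α+1) • LinearMap.id) (by
    intro m hm
    simp only [LinearMap.mem_ker, LinearMap.smul_apply, LinearMap.id_apply, pow_succ,
      mul_smul, hx m hm, smul_zero])

theorem mu_mk (hx : ∀ m ∈ N, x • m = 0) (α : ℕ) (m : M) :
    mu x N hx α (N.mkQ m) = x ^ (α+1) • m := rfl

section

variable {hx : ∀ m ∈ N, x • m = 0} {ht : ∀ (α : ℕ) (m : M), x ^ (α+1) • m = 0 → m ∈ N}

include ht in
theorem mu_inj (y : M ⧸ N) (α : ℕ) (h : mu x N hx α y = 0) : y = 0 := by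
  obtain ⟨m, rfl⟩ := N.mkQ_surjective y
  rw [mu_mk] at h
  simpa [Submodule.Quotient.mk_eq_zero] using ht α m h

include hx ht in
/-- The quotient `M⧸N` is `x`-torsion free. -/
theorem tf (y : M ⧸ N) (h : x • y = 0) : y = 0 := by
  obtain ⟨m, rfl⟩ := N.mkQ_surjective y
  rw [← map_smul, Submodule.mkQ_apply, Submodule.Quotient.mk_eq_zero] at h
  have : x ^ (1+1) • m = 0 := by
    rw [pow_succ, mul_smul, pow_one, hx _ h]
  simpa [Submodule.Quotient.mk_eq_zero] using ht 1 m this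

include hx ht in
theorem tf_pow (y : M ⧸ N) (k : ℕ) (h : x ^ k • y = 0) : y = 0 := by
  induction k generalizing y with
  | zero => simpa using h
  | succ k ih =>
    rw [pow_succ, mul_smul] at h
    exact tf x N (hx := hx) (ht := ht) y (ih (x • y) h)

end

variable (hx : ∀ m ∈ N, x • m = 0)

open scoped Classical in
/-- The (choice-based) connecting function on Cauchy sequences:
`D f 0 = π (f 0 - f 1)`, and `D f (α+1)` is the unique `y` with `μ α y = f (α+1) - f (α+2)`. -/
noncomputable def D (f : AdicCompletion.AdicCauchySequence (Ideal.span {x}) M) :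
    ∀ _ : ℕ, M ⧸ N := fun α =>
  match α with
  | 0 => N.mkQ (f.val 0 - f.val 1)
  | (β+1) =>
    if h : ∃ y : M ⧸ N, mu x N hx β y = f.val (β+1) - f.val (β+2) then h.choose else 0

theorem D_zero (f : AdicCompletion.AdicCauchySequence (Ideal.span {x}) M) :
    D x N hx f 0 = N.mkQ (f.val 0 - f.val 1) := rfl

theorem D_exists (f : AdicCompletion.AdicCauchySequence (Ideal.span {x}) M) (β : ℕ) :
    ∃ y : M ⧸ N, mu x N hx β y = f.val (β+1) - f.val (β+2) := by
  have h := f.property (Nat.le_succ (β+1))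
  rw [SModEq.sub_mem] at h
  obtain ⟨v, hv⟩ := (mem_pow_smul_top_iff x (β+1) _).mp h
  exact ⟨N.mkQ v, by rw [mu_mk, hv]⟩

theorem D_spec (f : AdicCompletion.AdicCauchySequence (Ideal.span {x}) M) (β : ℕ) :
    mu x N hx β (D x N hx f (β+1)) = f.val (β+1) - f.val (β+2) := by
  have h := D_exists x N hx f β
  simp only [D, dif_pos h]
  exact h.choose_spec

variable {ht : ∀ (α : ℕ) (m : M), x ^ (α+1) • m = 0 → m ∈ N}

include ht in
theorem D_unique (f : AdicCompletion.AdicCauchySequence (Ideal.span {x}) M) (β : ℕ)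
    (y : M ⧸ N) (hy : mu x N hx β y = f.val (β+1) - f.val (β+2)) :
    D x N hx f (β+1) = y := by
  have h1 := D_spec x N hx f β
  have : mu x N hx β (D x N hx f (β+1) - y) = 0 := by
    rw [map_sub, h1, hy, sub_self]
  have := mu_inj x N (ht := ht) _ β this
  rwa [sub_eq_zero] at this

include ht in
/-- `D` bundled as a linear map. -/
noncomputable def Dlin :
    AdicCompletion.AdicCauchySequence (Ideal.span {x}) M →ₗ[R] (∀ _ : ℕ, M ⧸ N) where
  toFun := D x N hx
  map_add' f g := by
    funext α
    match α with
    | 0 =>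
      simp only [D_zero, Pi.add_apply, ← map_add]
      congr 1
      show (f + g).val 0 - (f + g).val 1 = _
      rw [AdicCompletion.AdicCauchySequence.add_apply, AdicCompletion.AdicCauchySequence.add_apply]
      abel
    | (β+1) =>
      refine D_unique x N hx (ht := ht) _ β _ ?_
      rw [Pi.add_apply, map_add, D_spec, D_spec]
      show _ = (f + g).val (β+1) - (f + g).val (β+2)
      rw [AdicCompletion.AdicCauchySequence.add_apply, AdicCompletion.AdicCauchySequence.add_apply]
      abel
  map_smul' r f := by
    funext α
    match α with
    | 0 =>
      simp only [D_zero, RingHom.id_apply, Pi.smul_apply, ← map_smul]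
      congr 1
      show (r • f).val 0 - (r • f).val 1 = _
      rw [AdicCompletion.AdicCauchySequence.smul_apply, AdicCompletion.AdicCauchySequence.smul_apply]
      rw [smul_sub]
    | (β+1) =>
      refine D_unique x N hx (ht := ht) _ β _ ?_
      rw [RingHom.id_apply, Pi.smul_apply, map_smul, D_spec]
      show _ = (r • f).val (β+1) - (r • f).val (β+2)
      rw [AdicCompletion.AdicCauchySequence.smul_apply, AdicCompletion.AdicCauchySequence.smul_apply]
      rw [smul_sub]

theorem Dlin_apply (f : AdicCompletion.AdicCauchySequence (Ideal.span {x}) M) :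
    Dlin x N hx (ht := ht) f = D x N hx f := rfl

theorem mulxTrans_apply {A : Type u} [AddCommGroup A] [Module R A] (s : ∀ _ : ℕ, A) (n : ℕ) :
    mulxTrans A x s n = s n - x • s (n+1) := rfl

/-- The composite `ACS → ∏ M⧸N → coker`. -/
noncomputable def Dbar :
    AdicCompletion.AdicCauchySequence (Ideal.span {x}) M →ₗ[R]
      ((∀ _ : ℕ, M ⧸ N) ⧸ LinearMap.range (mulxTrans (M ⧸ N) x)) :=
  (LinearMap.range (mulxTrans (M ⧸ N) x)).mkQ ∘ₗ Dlin x N hx (ht := ht)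

include ht in
theorem Dbar_of_mk_zero (f : AdicCompletion.AdicCauchySequence (Ideal.span {x}) M)
    (h : AdicCompletion.mk (Ideal.span {x}) M f = 0) : Dbar x N hx (ht := ht) f = 0 := by
  have hcomp : ∀ α : ℕ, f.val α ∈ ((Ideal.span {x})^α • ⊤ : Submodule R M) := by
    intro α
    have := congrArg (fun ξ => AdicCompletion.eval (Ideal.span {x}) M α ξ) h
    simpa [AdicCompletion.eval_apply, AdicCompletion.mk_apply_coe,
      Submodule.Quotient.mk_eq_zero] using this
  choose v hv using fun α => (mem_pow_smul_top_iff x α (f.val α)).mp (hcomp α)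
  set s : ∀ _ : ℕ, M ⧸ N := fun α => N.mkQ (v α) with hs
  have hDf : D x N hx f = mulxTrans (M ⧸ N) x s := by
    funext α
    match α with
    | 0 =>
      rw [D_zero, mulxTrans_apply, hs, ← map_smul, ← map_sub]
      congr 1
      rw [← hv 0, ← hv 1, pow_zero, one_smul, pow_one]
    | (β+1) =>
      refine D_unique x N hx (ht := ht) f β _ ?_
      rw [mulxTrans_apply, map_sub, map_smul, hs]
      show mu x N hx β (N.mkQ (v (β+1))) - x • mu x N hx β (N.mkQ (v (β+2))) = _
      rw [mu_mk, mu_mk, ← hv (β+1), ← hv (β+2)]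
      rw [smul_smul, ← pow_succ']
  show (LinearMap.range (mulxTrans (M ⧸ N) x)).mkQ (Dlin x N hx (ht := ht) f) = 0
  rw [Dlin_apply, hDf, Submodule.mkQ_apply, Submodule.Quotient.mk_eq_zero]
  exact ⟨s, rfl⟩

include ht in
theorem Dbar_congr (f g : AdicCompletion.AdicCauchySequence (Ideal.span {x}) M)
    (h : AdicCompletion.mk (Ideal.span {x}) M f = AdicCompletion.mk (Ideal.span {x}) M g) :
    Dbar x N hx (ht := ht) f = Dbar x N hx (ht := ht) g := by
  have h0 : AdicCompletion.mk (Ideal.span {x}) M (f - g) = 0 := by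
    rw [map_sub, h, sub_self]
  have := Dbar_of_mk_zero x N hx (ht := ht) (f - g) h0
  rw [map_sub, sub_eq_zero] at this
  exact this

/-- The connecting map `δ`. -/
noncomputable def delta :
    AdicCompletion (Ideal.span {x}) M →ₗ[R]
      ((∀ _ : ℕ, M ⧸ N) ⧸ LinearMap.range (mulxTrans (M ⧸ N) x)) where
  toFun ξ := Dbar x N hx (ht := ht)
    (AdicCompletion.mk_surjective (Ideal.span {x}) M ξ).choose
  map_add' ξ η := by
    have h1 := (AdicCompletion.mk_surjective (Ideal.span {x}) M ξ).choose_spec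
    have h2 := (AdicCompletion.mk_surjective (Ideal.span {x}) M η).choose_spec
    have h3 := (AdicCompletion.mk_surjective (Ideal.span {x}) M (ξ + η)).choose_spec
    rw [← map_add (Dbar x N hx (ht := ht))]
    exact Dbar_congr x N hx (ht := ht) _ _ (by rw [h3, map_add, h1, h2])
  map_smul' r ξ := by
    have h1 := (AdicCompletion.mk_surjective (Ideal.span {x}) M ξ).choose_spec
    have h3 := (AdicCompletion.mk_surjective (Ideal.span {x}) M (r • ξ)).choose_spec
    rw [RingHom.id_apply, ← map_smul (Dbar x N hx (ht := ht))]
    exact Dbar_congr x N hx (ht := ht) _ _ (by rw [h3, map_smul, h1])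

theorem delta_mk (f : AdicCompletion.AdicCauchySequence (Ideal.span {x}) M) :
    delta x N hx (ht := ht) (AdicCompletion.mk (Ideal.span {x}) M f) =
      Dbar x N hx (ht := ht) f := by
  refine Dbar_congr x N hx (ht := ht) _ _ ?_
  exact (AdicCompletion.mk_surjective (Ideal.span {x}) M _).choose_spec

theorem ker_mulxTrans_iff {A : Type u} [AddCommGroup A] [Module R A] (s : ∀ _ : ℕ, A) :
    s ∈ LinearMap.ker (mulxTrans A x) ↔ ∀ n, s n = x • s (n+1) := by
  rw [LinearMap.mem_ker]
  constructor
  · intro h n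
    have := congrFun h n
    rw [mulxTrans_apply] at this
    have : s n - x • s (n+1) = 0 := this
    rwa [sub_eq_zero] at this
  · intro h
    funext n
    show s n - x • s (n+1) = 0
    rw [← h n, sub_self]

theorem ker_iterate {A : Type u} [AddCommGroup A] [Module R A] (s : ∀ _ : ℕ, A)
    (hs : ∀ n, s n = x • s (n+1)) (k n : ℕ) : s n = x ^ k • s (n + k) := by
  induction k with
  | zero => simp
  | succ k ih =>
    rw [ih, hs (n + k), smul_smul, ← pow_succ]
    rfl

/-- The map `lim {M/N, x} → M`, `s ↦ x • (lift of s 1)`. -/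
noncomputable def iota : (LinearMap.ker (mulxTrans (M ⧸ N) x)) →ₗ[R] M :=
  (mu x N hx 0) ∘ₗ (LinearMap.proj 1) ∘ₗ (LinearMap.ker (mulxTrans (M ⧸ N) x)).subtype

theorem iota_apply (s : LinearMap.ker (mulxTrans (M ⧸ N) x)) :
    iota x N hx s = mu x N hx 0 (s.val 1) := rfl

include ht in
theorem iota_injective : Function.Injective (iota x N hx) := by
  rw [injective_iff_map_eq_zero]
  intro s h
  rw [iota_apply] at h
  have h1 : s.val 1 = 0 := mu_inj x N (ht := ht) _ 0 h
  have hs : ∀ n, s.val n = x • s.val (n+1) := (ker_mulxTrans_iff x _).mp s.property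
  have : ∀ n, s.val n = 0 := by
    intro n
    match n with
    | 0 => rw [hs 0, h1, smul_zero]
    | (k+1) =>
      have h2 : s.val 1 = x ^ k • s.val (1 + k) := ker_iterate x _ hs k 1
      rw [h1] at h2
      rw [Nat.add_comm 1 k] at h2
      exact tf_pow x N (hx := hx) (ht := ht) _ k h2.symm
  exact Subtype.ext (funext this)

theorem mem_ker_of_iff (m : M) :
    m ∈ LinearMap.ker (AdicCompletion.of (Ideal.span {x}) M) ↔
      ∀ α : ℕ, m ∈ ((Ideal.span {x})^α • ⊤ : Submodule R M) := by
  rw [LinearMap.mem_ker]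
  constructor
  · intro h α
    have := congrArg (fun ξ => AdicCompletion.eval (Ideal.span {x}) M α ξ) h
    simpa [AdicCompletion.eval_apply, AdicCompletion.of_apply,
      Submodule.Quotient.mk_eq_zero] using this
  · intro h
    ext n
    simpa [Submodule.Quotient.mk_eq_zero] using h n

include ht in
theorem range_iota :
    LinearMap.range (iota x N hx) = LinearMap.ker (AdicCompletion.of (Ideal.span {x}) M) := by
  ext m
  rw [mem_ker_of_iff]
  constructor
  · rintro ⟨s, rfl⟩
    intro α
    rw [iota_apply]
    have hs : ∀ n, s.val n = x • s.val (n+1) := (ker_mulxTrans_iff x _).mp s.property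
    rw [ker_iterate x _ hs α 1, map_smul]
    exact (mem_pow_smul_top_iff x α _).mpr ⟨mu x N hx 0 (s.val (1 + α)), rfl⟩
  · intro h
    choose v hv using fun α => (mem_pow_smul_top_iff x α m).mp (h α)
    set s : ∀ _ : ℕ, M ⧸ N := fun α => N.mkQ (v α) with hsdef
    have hker : s ∈ LinearMap.ker (mulxTrans (M ⧸ N) x) := by
      rw [ker_mulxTrans_iff]
      intro n
      rw [hsdef, ← map_smul, ← sub_eq_zero, ← map_sub, Submodule.mkQ_apply,
        Submodule.Quotient.mk_eq_zero]
      match n with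
      | 0 =>
        have : v 0 - x • v 1 = 0 := by
          have h0 : v 0 = m := by rw [← hv 0, pow_zero, one_smul]
          have h1' : x • v 1 = m := by rw [← hv 1, pow_one]
          rw [h0, h1', sub_self]
        rw [this]; exact N.zero_mem
      | (k+1) =>
        refine ht k _ ?_
        rw [smul_sub, hv (k+1), smul_smul, ← pow_succ, hv (k+2), sub_self]
    refine ⟨⟨s, hker⟩, ?_⟩
    rw [iota_apply]
    show mu x N hx 0 (N.mkQ (v 1)) = m
    rw [mu_mk, zero_add]
    exact hv 1

include ht in
theorem delta_surjective : Function.Surjective (delta x N hx (ht := ht)) := by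
  intro z
  obtain ⟨a, rfl⟩ := (LinearMap.range (mulxTrans (M ⧸ N) x)).mkQ_surjective z
  choose c hc using fun α => N.mkQ_surjective (a α)
  set fs : ℕ → M := fun α => -(∑ β ∈ Finset.range α, x ^ β • c β) with hfs
  have hdiff : ∀ n, fs n - fs (n+1) = x ^ n • c n := by
    intro n
    rw [hfs]
    simp only [Finset.sum_range_succ]
    abel
  have hcauchy : ∀ n, fs n ≡ fs (n+1) [SMOD ((Ideal.span {x}) ^ n • ⊤ : Submodule R M)] := by
    intro n
    rw [SModEq.sub_mem, hdiff n]
    exact (mem_pow_smul_top_iff x n _).mpr ⟨c n, rfl⟩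
  set f := AdicCompletion.AdicCauchySequence.mk (Ideal.span {x}) M fs hcauchy with hfdef
  have hfval : ∀ n, f.val n = fs n := fun n => rfl
  have hDf : D x N hx f = a := by
    funext α
    match α with
    | 0 =>
      rw [D_zero, hfval, hfval, hdiff 0, pow_zero, one_smul, hc 0]
    | (β+1) =>
      refine D_unique x N hx (ht := ht) f β _ ?_
      rw [← hc (β+1), mu_mk, hfval, hfval, hdiff (β+1)]
  refine ⟨AdicCompletion.mk (Ideal.span {x}) M f, ?_⟩
  rw [delta_mk]
  show (LinearMap.range (mulxTrans (M ⧸ N) x)).mkQ (Dlin x N hx (ht := ht) f) = _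
  rw [Dlin_apply, hDf]

include ht in
theorem range_of_eq_ker_delta :
    LinearMap.range (AdicCompletion.of (Ideal.span {x}) M) =
      LinearMap.ker (delta x N hx (ht := ht)) := by
  ext ξ
  constructor
  · rintro ⟨m, rfl⟩
    rw [LinearMap.mem_ker]
    set f : AdicCompletion.AdicCauchySequence (Ideal.span {x}) M :=
      ⟨fun _ => m, fun {_ _} _ => SModEq.refl _⟩ with hfdef
    have hmk : AdicCompletion.mk (Ideal.span {x}) M f = AdicCompletion.of (Ideal.span {x}) M m :=
      AdicCompletion.ext (fun n => rfl)
    rw [← hmk, delta_mk]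
    have hDf : D x N hx f = 0 := by
      funext α
      match α with
      | 0 =>
        rw [D_zero]
        show N.mkQ (m - m) = 0
        rw [sub_self, map_zero]
      | (β+1) =>
        refine D_unique x N hx (ht := ht) f β 0 ?_
        rw [map_zero]
        show (0 : M) = m - m
        rw [sub_self]
    show (LinearMap.range (mulxTrans (M ⧸ N) x)).mkQ (Dlin x N hx (ht := ht) f) = 0
    rw [Dlin_apply, hDf, map_zero]
  · intro hξ
    obtain ⟨f, rfl⟩ := AdicCompletion.mk_surjective (Ideal.span {x}) M ξ
    rw [LinearMap.mem_ker, delta_mk] at hξ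
    have : (LinearMap.range (mulxTrans (M ⧸ N) x)).mkQ (D x N hx f) = 0 := hξ
    rw [Submodule.mkQ_apply, Submodule.Quotient.mk_eq_zero] at this
    obtain ⟨s, hsT⟩ := this
    choose u hu using fun α => N.mkQ_surjective (s α)
    set c : M := f.val 1 - x ^ 1 • u 1 with hcdef
    have hrel : ∀ β : ℕ, f.val (β+1) - x ^ (β+1) • u (β+1) = c := by
      intro β
      induction β with
      | zero => rfl
      | succ β ih =>
        have h1 : mulxTrans (M ⧸ N) x s (β+1) = D x N hx f (β+1) := by rw [hsT]
        have h2 := congrArg (mu x N hx β) h1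
        rw [D_spec, mulxTrans_apply, map_sub, map_smul, ← hu (β+1), ← hu (β+2),
          mu_mk, mu_mk, smul_smul, ← pow_succ'] at h2
        have h3 : f.val (β+1) - x ^ (β+1) • u (β+1) = f.val (β+2) - x ^ (β+2) • u (β+2) := by
          rw [sub_eq_sub_iff_sub_eq_sub]
          exact h2.symm
        rw [← h3, ih]
    refine ⟨c, ?_⟩
    refine AdicCompletion.ext (fun n => ?_)
    show Submodule.Quotient.mk c = Submodule.Quotient.mk (f.val n)
    rw [Submodule.Quotient.eq]
    match n with
    | 0 =>
      exact (mem_pow_smul_top_iff x 0 _).mpr ⟨c - f.val 0, by rw [pow_zero, one_smul]⟩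
    | (β+1) =>
      have : c - f.val (β+1) = x ^ (β+1) • (-(u (β+1))) := by
        rw [smul_neg, ← hrel β]
        abel
      rw [this]
      exact (mem_pow_smul_top_iff x (β+1) _).mpr ⟨-(u (β+1)), rfl⟩

end Stmt19Aux

open Stmt19Aux in
/-- Let `R` be a commutative ring, `M` an `R`-module, `x ∈ R`, and
`N = ∪_{α ≥ 1} (0 :_M x^α)`. Suppose `N = 0 :_M x` (i.e. `xN = 0`). Then there is an exact
sequence `0 → lim {M/N, x} → M → \hat{M}^{xR} → lim¹ {M/N, x} → 0`, where `{M/N, x}` is the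
inverse system with all modules `M/N` and transition maps multiplication by `x`, the map
`M → \hat{M}^{xR} = lim_α M/x^α M` is the canonical one, `lim` is the kernel and `lim¹` the
cokernel of the map `∏ M/N → ∏ M/N` associated to the system. -/
theorem stmt19 (R : Type u) [CommRing R] (M : Type u) [AddCommGroup M] [Module R M] (x : R)
    (N : Submodule R M) (hN : N = ⨆ α : ℕ, Submodule.torsionBy R M (x ^ α))
    (hNx : N = Submodule.torsionBy R M x) :
    ∃ (ι : (LinearMap.ker (mulxTrans (M ⧸ N) x)) →ₗ[R] M)
      (δ : AdicCompletion (Ideal.span {x}) M →ₗ[R]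
        ((∀ _ : ℕ, M ⧸ N) ⧸ LinearMap.range (mulxTrans (M ⧸ N) x))),
      Function.Injective ι ∧ Function.Surjective δ ∧
        LinearMap.range ι = LinearMap.ker (AdicCompletion.of (Ideal.span {x}) M) ∧
        LinearMap.range (AdicCompletion.of (Ideal.span {x}) M) = LinearMap.ker δ := by
  have hx : ∀ m ∈ N, x • m = 0 := by
    intro m hm
    rw [hNx] at hm
    exact (Submodule.mem_torsionBy_iff x m).mp hm
  have ht : ∀ (α : ℕ) (m : M), x ^ (α+1) • m = 0 → m ∈ N := by
    intro α m h
    rw [hN]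
    exact le_iSup (fun β => Submodule.torsionBy R M (x ^ β)) (α+1)
      ((Submodule.mem_torsionBy_iff _ m).mpr h)
  exact ⟨iota x N hx, delta x N hx (ht := ht),
    iota_injective x N (hx := hx) (ht := ht),
    delta_surjective x N hx (ht := ht),
    range_iota x N hx (ht := ht),
    range_of_eq_ker_delta x N hx (ht := ht)⟩
end
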